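/- arXiv:2103.04091 — 3 statements merged into one kernel-verified Lean document; each statement's English description precedes it below -/
import Mathlib

section
/- Let Π be a symmetric positive definite solution of the ARE AᵀΠ + ΠA − ΠBR⁻¹BᵀΠ + Q = 0 with Q symmetric positive definite and R symmetric positive definite. Then the closed-loop matrix A − BR⁻¹BᵀΠ is Hurwitz, i.e., every eigenvalue has negative real part. -/
/-!
The Riccati equation rewrites as a Lyapunov equation for the closed-loop matrix
`M = A - B R⁻¹ Bᵀ Π`, namely `Mᵀ Π + Π M = -(Q + Π B R⁻¹ Bᵀ Π)`, whose right-hand side is negative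
definite. If `M v = μ v` with `v ≠ 0` complex, then `v* (Mᵀ Π + Π M) v = 2 Re μ · v* Π v`, and since
`v* Π v > 0` this forces `Re μ < 0`.
-/

open Matrix

/-- A real square matrix is Hurwitz if every complex eigenvalue has
strictly negative real part. -/
def IsHurwitz {n : ℕ} (M : Matrix (Fin n) (Fin n) ℝ) : Prop :=
  ∀ μ ∈ spectrum ℂ (M.map (Complex.ofReal)), μ.re < 0

namespace Matrix

open scoped ComplexOrder

variable {ι : Type*} [Fintype ι]

theorem exists_mulVec_eq_smul_of_mem_spectrum [DecidableEq ι] {K : Type*} [Field K]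
    {M : Matrix ι ι K} {μ : K} (hμ : μ ∈ spectrum K M) : ∃ v ≠ 0, M *ᵥ v = μ • v := by
  rw [← spectrum_toLin', ← Module.End.hasEigenvalue_iff_mem_spectrum] at hμ
  obtain ⟨v, hv⟩ := hμ.exists_hasEigenvector
  exact ⟨v, hv.2, by simpa using hv.apply_eq_smul⟩

theorem star_dotProduct_lyapunov_mulVec_of_mulVec_eq_smul {α : Type*} [CommRing α] [StarRing α]
    {M P : Matrix ι ι α} {μ : α} {v : ι → α} (hv : M *ᵥ v = μ • v) :
    star v ⬝ᵥ (Mᴴ * P + P * M) *ᵥ v = (star μ + μ) * (star v ⬝ᵥ P *ᵥ v) := by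
  rw [add_mulVec, dotProduct_add, ← mulVec_mulVec, ← mulVec_mulVec,
    dotProduct_mulVec (star v) Mᴴ, ← star_mulVec, hv, mulVec_smul,
    star_smul, smul_dotProduct, dotProduct_smul, smul_eq_mul, smul_eq_mul, add_mul]

theorem PosSemidef.map_ofReal [DecidableEq ι] {M : Matrix ι ι ℝ} (hM : M.PosSemidef) :
    (M.map Complex.ofReal).PosSemidef := by
  open MatrixOrder in
  obtain ⟨S, rfl⟩ := CStarAlgebra.nonneg_iff_eq_star_mul_self.mp hM.nonneg
  have hS : (star S * S).map Complex.ofReal = (S.map Complex.ofReal)ᴴ * S.map Complex.ofReal := by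
    rw [star_eq_conjTranspose, ← conjTranspose_map _ fun x => by simp]
    exact Matrix.map_mul (f := Complex.ofRealHom)
  rw [hS]
  exact posSemidef_conjTranspose_mul_self _

theorem PosDef.map_ofReal [DecidableEq ι] {M : Matrix ι ι ℝ} (hM : M.PosDef) :
    (M.map Complex.ofReal).PosDef := by
  have hdet : (M.map Complex.ofReal).det = M.det := (Complex.ofRealHom.map_det M).symm
  rw [hM.posSemidef.map_ofReal.posDef_iff_det_ne_zero, hdet]
  exact Complex.ofReal_ne_zero.mpr hM.det_pos.ne'

theorem riccati_closedLoop_lyapunov {κ α : Type*} [Fintype κ] [DecidableEq κ] [CommRing α]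
    {A Q P : Matrix ι ι α} {B : Matrix ι κ α} {R : Matrix κ κ α}
    (hP : P.IsSymm) (hR : R.IsSymm) (hARE : Aᵀ * P + P * A - P * B * R⁻¹ * Bᵀ * P + Q = 0) :
    (A - B * R⁻¹ * Bᵀ * P)ᵀ * P + P * (A - B * R⁻¹ * Bᵀ * P) = -(Q + P * B * R⁻¹ * Bᵀ * P) := by
  have hRinv : (R⁻¹)ᵀ = R⁻¹ := by rw [transpose_nonsing_inv, hR.eq]
  rw [← sub_eq_zero, ← hARE]
  simp only [transpose_sub, transpose_mul, transpose_transpose, hP.eq, hRinv, sub_mul, mul_sub,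
    Matrix.mul_assoc]
  abel

theorem isHurwitz_of_lyapunov {n : ℕ} {M P N : Matrix (Fin n) (Fin n) ℝ} (hP : P.PosDef)
    (hN : N.PosDef) (h : Mᵀ * P + P * M = -N) : IsHurwitz M := by
  intro μ hμ
  obtain ⟨v, hv0, hv⟩ := exists_mulVec_eq_smul_of_mem_spectrum hμ
  have hlyap : (M.map Complex.ofReal)ᴴ * P.map Complex.ofReal
      + P.map Complex.ofReal * M.map Complex.ofReal = -N.map Complex.ofReal := by
    have h' := congrArg Complex.ofRealHom.mapMatrix h
    rw [map_add, map_mul, map_mul, map_neg] at h'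
    rwa [← conjTranspose_map _ fun x => by simp]
  have key := star_dotProduct_lyapunov_mulVec_of_mulVec_eq_smul (P := P.map Complex.ofReal) hv
  rw [hlyap, neg_mulVec, dotProduct_neg] at key
  set p := star v ⬝ᵥ P.map Complex.ofReal *ᵥ v
  set q := star v ⬝ᵥ N.map Complex.ofReal *ᵥ v
  obtain ⟨hp, hp_im⟩ : 0 < p.re ∧ 0 = p.im :=
    Complex.pos_iff.mp (hP.map_ofReal.dotProduct_mulVec_pos hv0)
  have hq : 0 < q.re := (Complex.pos_iff.mp (hN.map_ofReal.dotProduct_mulVec_pos hv0)).1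
  have hre : -q.re = 2 * μ.re * p.re := by
    simpa [Complex.mul_re, ← hp_im, two_mul] using congrArg Complex.re key
  nlinarith

end Matrix

theorem stmt_2 {n m : ℕ}
    (A Q P : Matrix (Fin n) (Fin n) ℝ) (B : Matrix (Fin n) (Fin m) ℝ)
    (R : Matrix (Fin m) (Fin m) ℝ)
    (hR : R.PosDef) (hQ : Q.PosDef) (hP : P.PosDef)
    (hARE : Aᵀ * P + P * A - P * B * R⁻¹ * Bᵀ * P + Q = 0) :
    IsHurwitz (A - B * R⁻¹ * Bᵀ * P) := by
  have hPs : P.IsSymm := isHermitian_iff_isSymm.mp hP.isHermitian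
  have hRs : R.IsSymm := isHermitian_iff_isSymm.mp hR.isHermitian
  refine isHurwitz_of_lyapunov hP ?_ (riccati_closedLoop_lyapunov hPs hRs hARE)
  have hK : P * B * R⁻¹ * Bᵀ * P = (Bᵀ * P)ᴴ * R⁻¹ * (Bᵀ * P) := by
    simp [hPs.eq, Matrix.mul_assoc]
  rw [hK]
  exact hQ.add_posSemidef (hR.inv.posSemidef.conjTranspose_mul_mul_same _)
end

section
/- If Π is a symmetric positive definite solution of the ARE with Q symmetric positive definite and R symmetric positive definite, then every solution of ẋ = (A − BR⁻¹BᵀΠ)x converges to 0 as t → ∞. -/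
/-!
`P` is a Lyapunov matrix for the closed loop `A_c = A - B R⁻¹ Bᵀ P`: the Riccati equation can be
rewritten as `A_cᵀ P + P A_c = -(Q + P B R⁻¹ Bᵀ P)`, whose right-hand side is negative definite.
Hence `V = xᵀ P x` satisfies `V' ≤ -k V` for some `k > 0`, so `V` decays exponentially, and since
`V` dominates a multiple of `‖x‖²`, the trajectory tends to `0`. Both comparison constants come
from minimising a ratio of degree-two homogeneous functions over the compact unit sphere.
-/

open Matrix Filter Topology

theorem exists_pos_mul_le_of_homogeneous {E : Type*} [NormedAddCommGroup E] [NormedSpace ℝ E]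
    [ProperSpace E] {f g : E → ℝ} (hf : Continuous f) (hg : Continuous g)
    (hf_smul : ∀ (a : ℝ) v, f (a • v) = a ^ 2 * f v)
    (hg_smul : ∀ (a : ℝ) v, g (a • v) = a ^ 2 * g v)
    (hf_pos : ∀ v ≠ 0, 0 < f v) (hg_pos : ∀ v ≠ 0, 0 < g v) :
    ∃ k > 0, ∀ v, k * g v ≤ f v := by
  have hf0 : f 0 = 0 := by simpa using hf_smul 0 0
  have hg0 : g 0 = 0 := by simpa using hg_smul 0 0
  rcases subsingleton_or_nontrivial E with hE | hE
  · exact ⟨1, one_pos, fun v => by simp [Subsingleton.elim v 0, hf0, hg0]⟩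
  have ne_zero_of_mem : ∀ w ∈ Metric.sphere (0 : E) 1, w ≠ 0 := fun w hw =>
    ne_zero_of_mem_unit_sphere ⟨w, hw⟩
  obtain ⟨u, hu, hmin⟩ := (isCompact_sphere (0 : E) 1).exists_isMinOn
    (NormedSpace.sphere_nonempty.2 zero_le_one)
    (hf.continuousOn.div hg.continuousOn fun w hw => (hg_pos w (ne_zero_of_mem w hw)).ne')
  refine ⟨f u / g u, div_pos (hf_pos u (ne_zero_of_mem u hu)) (hg_pos u (ne_zero_of_mem u hu)),
    fun v => ?_⟩
  rcases eq_or_ne v 0 with rfl | hv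
  · simp [hf0, hg0]
  set w := ‖v‖⁻¹ • v
  have hw : w ∈ Metric.sphere (0 : E) 1 := by simp [w, norm_smul, hv]
  have hvw : v = ‖v‖ • w := by
    simp only [w, smul_smul, mul_inv_cancel₀ (norm_ne_zero_iff.2 hv), one_smul]
  have hkw : f u / g u * g w ≤ f w :=
    (le_div_iff₀ (hg_pos w (ne_zero_of_mem w hw))).1 (hmin hw)
  rw [hvw, hf_smul, hg_smul]
  nlinarith [sq_nonneg ‖v‖]

theorem tendsto_zero_of_hasDerivAt_le_neg_mul {V V' : ℝ → ℝ} {k : ℝ} (hk : 0 < k)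
    (hV : ∀ t, HasDerivAt V (V' t) t) (hV' : ∀ t, V' t ≤ -(k * V t)) (hV0 : ∀ t, 0 ≤ V t) :
    Tendsto V atTop (𝓝 0) := by
  have hanti : Antitone fun t => V t * Real.exp (k * t) := by
    refine antitone_of_hasDerivAt_nonpos
      (fun t => (hV t).mul ((hasDerivAt_id t).const_mul k).exp) fun t => ?_
    simp only [Pi.zero_apply, id, mul_one]
    nlinarith [hV' t, Real.exp_pos (k * t)]
  have hle : ∀ t ≥ 0, V t ≤ V 0 * Real.exp (-(k * t)) := fun t ht => by
    rw [Real.exp_neg, ← div_eq_mul_inv, le_div_iff₀ (Real.exp_pos _)]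
    simpa using hanti ht
  have hbound : Tendsto (fun t => V 0 * Real.exp (-(k * t))) atTop (𝓝 0) := by
    simpa using (Real.tendsto_exp_neg_atTop_nhds_zero.comp
      (tendsto_id.const_mul_atTop hk)).const_mul (V 0)
  exact squeeze_zero' (.of_forall hV0) (eventually_ge_atTop 0 |>.mono hle) hbound

section Derivatives

variable {𝕜 : Type*} [NontriviallyNormedField 𝕜] {m n : Type*} [Fintype n]
  {x y : 𝕜 → n → 𝕜} {x' y' : n → 𝕜} {t : 𝕜}

theorem HasDerivAt.dotProduct (hx : HasDerivAt x x' t) (hy : HasDerivAt y y' t) :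
    HasDerivAt (fun s => x s ⬝ᵥ y s) (x' ⬝ᵥ y t + x t ⬝ᵥ y') t := by
  simp only [_root_.dotProduct, ← Finset.sum_add_distrib]
  exact .fun_sum fun i _ => (hasDerivAt_pi.1 hx i).mul (hasDerivAt_pi.1 hy i)

theorem HasDerivAt.mulVec (M : Matrix m n 𝕜) (hx : HasDerivAt x x' t) :
    HasDerivAt (fun s => M *ᵥ x s) (M *ᵥ x') t :=
  hasDerivAt_pi.2 fun i => .fun_sum fun j _ => (hasDerivAt_pi.1 hx j).const_mul (M i j)

theorem HasDerivAt.dotProduct_mulVec_self_of_linear {M P : Matrix n n 𝕜}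
    (hx : HasDerivAt x (M *ᵥ x t) t) :
    HasDerivAt (fun s => x s ⬝ᵥ (P *ᵥ x s)) (x t ⬝ᵥ ((Mᵀ * P + P * M) *ᵥ x t)) t := by
  convert hx.dotProduct (hx.mulVec P) using 1
  rw [add_mulVec, dotProduct_add, ← mulVec_mulVec, ← mulVec_mulVec, dotProduct_mulVec (x t) Mᵀ,
    vecMul_transpose]

end Derivatives

section QuadraticForm

variable {ι : Type*} [Fintype ι]

theorem continuous_dotProduct_mulVec_self (M : Matrix ι ι ℝ) :
    Continuous fun v : ι → ℝ => v ⬝ᵥ (M *ᵥ v) :=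
  continuous_id.dotProduct (continuous_const.matrix_mulVec continuous_id)

theorem smul_dotProduct_mulVec_smul (M : Matrix ι ι ℝ) (a : ℝ) (v : ι → ℝ) :
    a • v ⬝ᵥ (M *ᵥ a • v) = a ^ 2 * (v ⬝ᵥ (M *ᵥ v)) := by
  simp only [mulVec_smul, smul_dotProduct, dotProduct_smul, smul_eq_mul]
  ring

theorem Matrix.PosDef.exists_pos_mul_le {P S : Matrix ι ι ℝ} (hP : P.PosDef) (hS : S.PosDef) :
    ∃ k > 0, ∀ v, k * (v ⬝ᵥ (P *ᵥ v)) ≤ v ⬝ᵥ (S *ᵥ v) :=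
  exists_pos_mul_le_of_homogeneous (continuous_dotProduct_mulVec_self S)
    (continuous_dotProduct_mulVec_self P) (smul_dotProduct_mulVec_smul S)
    (smul_dotProduct_mulVec_smul P) (fun _ => hS.dotProduct_mulVec_pos)
    (fun _ => hP.dotProduct_mulVec_pos)

theorem Matrix.PosDef.exists_pos_mul_norm_sq_le {P : Matrix ι ι ℝ} (hP : P.PosDef) :
    ∃ c > 0, ∀ v, c * ‖v‖ ^ 2 ≤ v ⬝ᵥ (P *ᵥ v) :=
  exists_pos_mul_le_of_homogeneous (continuous_dotProduct_mulVec_self P) (continuous_norm.pow 2)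
    (smul_dotProduct_mulVec_smul P)
    (fun a v => by rw [norm_smul, mul_pow, Real.norm_eq_abs, sq_abs])
    (fun _ => hP.dotProduct_mulVec_pos) (fun _ hv => by positivity)

theorem tendsto_zero_of_transpose_mul_add_mul_eq_neg {M P S : Matrix ι ι ℝ} (hP : P.PosDef)
    (hS : S.PosDef) (hMPS : Mᵀ * P + P * M = -S) {x : ℝ → ι → ℝ}
    (hx : ∀ t, HasDerivAt x (M *ᵥ x t) t) :
    Tendsto x atTop (𝓝 0) := by
  obtain ⟨k, hk, hPS⟩ := hP.exists_pos_mul_le hS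
  obtain ⟨c, hc, hnormP⟩ := hP.exists_pos_mul_norm_sq_le
  have hV : Tendsto (fun t => x t ⬝ᵥ (P *ᵥ x t)) atTop (𝓝 0) :=
    tendsto_zero_of_hasDerivAt_le_neg_mul hk
      (fun t => (hx t).dotProduct_mulVec_self_of_linear)
      (fun t => by rw [hMPS, neg_mulVec, dotProduct_neg]; linarith [hPS (x t)])
      (fun t => by simpa using hP.posSemidef.dotProduct_mulVec_nonneg (x t))
  have hnorm_sq : Tendsto (fun t => ‖x t‖ ^ 2) atTop (𝓝 0) := by
    refine squeeze_zero (fun _ => by positivity) (fun t => ?_) (by simpa using hV.const_mul c⁻¹)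
    rw [← div_eq_inv_mul, le_div_iff₀' hc]
    exact hnormP (x t)
  rw [tendsto_zero_iff_norm_tendsto_zero]
  simpa [Function.comp_def] using (Real.continuous_sqrt.tendsto 0).comp hnorm_sq

end QuadraticForm

theorem transpose_mul_add_mul_eq_neg_of_riccati {ι R : Type*} [Fintype ι] [CommRing R]
    {A P G Q : Matrix ι ι R} (hP : Pᵀ = P) (hG : Gᵀ = G)
    (h : Aᵀ * P + P * A - P * G * P + Q = 0) :
    (A - G * P)ᵀ * P + P * (A - G * P) = -(Q + P * G * P) := by
  rw [eq_neg_iff_add_eq_zero, ← h, transpose_sub, transpose_mul, hP, hG]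
  simp only [sub_mul, mul_sub, Matrix.mul_assoc]
  abel

theorem stmt_5 {n m : ℕ}
    (A Q P : Matrix (Fin n) (Fin n) ℝ) (B : Matrix (Fin n) (Fin m) ℝ)
    (R : Matrix (Fin m) (Fin m) ℝ)
    (hQ : Q.PosDef) (hR : R.PosDef) (hP : P.PosDef)
    (hARE : Aᵀ * P + P * A - P * B * R⁻¹ * Bᵀ * P + Q = 0)
    (x : ℝ → Fin n → ℝ)
    (hx : ∀ t, HasDerivAt x ((A - B * R⁻¹ * Bᵀ * P) *ᵥ x t) t) :
    Tendsto x atTop (nhds 0) := by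
  have hG : (B * R⁻¹ * Bᵀ).PosSemidef := by
    simpa [conjTranspose_eq_transpose_of_trivial] using
      hR.posSemidef.inv.mul_mul_conjTranspose_same B
  have hGt : (B * R⁻¹ * Bᵀ)ᵀ = B * R⁻¹ * Bᵀ := by
    simpa [conjTranspose_eq_transpose_of_trivial] using hG.isHermitian.eq
  have hPt : Pᵀ = P := by simpa [conjTranspose_eq_transpose_of_trivial] using hP.isHermitian.eq
  have hPGP : (P * (B * R⁻¹ * Bᵀ) * P).PosSemidef := by
    simpa [hPt] using hG.conjTranspose_mul_mul_same P
  refine tendsto_zero_of_transpose_mul_add_mul_eq_neg hP (hQ.add_posSemidef hPGP)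
    (transpose_mul_add_mul_eq_neg_of_riccati hPt hGt ?_) hx
  simpa only [Matrix.mul_assoc] using hARE
end

section
/- If both Π₁ and Π₂ are symmetric solutions of the ARE with S = BR⁻¹Bᵀ, and both closed-loop matrices A − SΠ₁ and A − SΠ₂ are Hurwitz, then Π₁ = Π₂ (uniqueness of the stabilizing solution). -/
/-!
Subtracting the two Riccati equations gives the Sylvester equation
`(A - S P₁)ᵀ Δ + Δ (A - S P₂) = 0` for `Δ = P₁ - P₂`. Both closed-loop matrices are Hurwitz, so
the spectra of `(A - S P₁)ᵀ` and `-(A - S P₂)` lie in opposite open half-planes, and a Sylvester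
equation `M Δ = Δ N` with disjoint spectra only has the solution `Δ = 0`: from `M Δ = Δ N` we get
`p(M) Δ = Δ p(N)` for every polynomial `p`, and for `p = χ_N` the matrix `χ_N(M)` is invertible by
the spectral mapping theorem while `χ_N(N) = 0` by Cayley–Hamilton.
-/

open Matrix

open Polynomial

namespace Matrix

variable {ι K : Type*} [Fintype ι] [DecidableEq ι] [Field K]

theorem spectrum_transpose (M : Matrix ι ι K) : spectrum K Mᵀ = spectrum K M := by
  ext μ
  simp only [mem_spectrum_iff_isRoot_charpoly, charpoly_transpose]

theorem aeval_mul_eq_mul_aeval_of_mul_eq_mul {M N Δ : Matrix ι ι K} (h : M * Δ = Δ * N)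
    (p : K[X]) : aeval M p * Δ = Δ * aeval N p := by
  induction p using Polynomial.induction_on' with
  | add p q hp hq => rw [map_add, map_add, add_mul, mul_add, hp, hq]
  | monomial k a =>
    have hpow : M ^ k * Δ = Δ * N ^ k := (SemiconjBy.pow_right h.symm k).symm
    rw [aeval_monomial, aeval_monomial, mul_assoc, hpow, ← mul_assoc, Algebra.commutes a Δ,
      mul_assoc]

theorem eq_zero_of_mul_eq_mul_of_disjoint_spectrum [IsAlgClosed K] {M N Δ : Matrix ι ι K}
    (h : M * Δ = Δ * N) (hMN : Disjoint (spectrum K M) (spectrum K N)) : Δ = 0 := by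
  cases isEmpty_or_nonempty ι
  · exact Subsingleton.elim _ _
  have hunit : IsUnit (aeval M N.charpoly) := by
    have hdeg : 0 < N.charpoly.degree := by simp [charpoly_degree_eq_dim, Fintype.card_pos]
    rw [← spectrum.zero_notMem_iff K, spectrum.map_polynomial_aeval_of_degree_pos M _ hdeg]
    rintro ⟨μ, hμM, hμN⟩
    exact hMN.notMem_of_mem_left hμM (mem_spectrum_iff_isRoot_charpoly.mpr hμN)
  rw [← hunit.mul_right_eq_zero, aeval_mul_eq_mul_aeval_of_mul_eq_mul h, aeval_self_charpoly,
    mul_zero]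

end Matrix

section Hurwitz

variable {n : ℕ}

theorem IsHurwitz.disjoint_spectrum_transpose_neg {X Y : Matrix (Fin n) (Fin n) ℝ}
    (hX : IsHurwitz X) (hY : IsHurwitz Y) :
    Disjoint (spectrum ℂ (X.map Complex.ofReal)ᵀ) (spectrum ℂ (-Y.map Complex.ofReal)) := by
  rw [Set.disjoint_left, spectrum_transpose, ← spectrum.neg_eq]
  intro μ hμX hμY
  have := hY (-μ) hμY
  rw [Complex.neg_re] at this
  linarith [hX μ hμX]

theorem IsHurwitz.eq_zero_of_transpose_mul_add_mul_eq_zero {X Y Δ : Matrix (Fin n) (Fin n) ℝ}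
    (hX : IsHurwitz X) (hY : IsHurwitz Y) (h : Xᵀ * Δ + Δ * Y = 0) : Δ = 0 := by
  have hℂ : (X.map Complex.ofReal)ᵀ * Δ.map Complex.ofReal
      = Δ.map Complex.ofReal * -Y.map Complex.ofReal := by
    have := congrArg (RingHom.mapMatrix Complex.ofRealHom) (eq_neg_of_add_eq_zero_left h)
    simp only [map_mul, map_neg, RingHom.mapMatrix_apply, transpose_map] at this
    rwa [mul_neg]
  have hΔ := eq_zero_of_mul_eq_mul_of_disjoint_spectrum hℂ
    (hX.disjoint_spectrum_transpose_neg hY)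
  exact map_injective Complex.ofReal_injective (by simpa using hΔ)

end Hurwitz

theorem riccati_sub_riccati {ι R : Type*} [Fintype ι] [CommRing R] {A Q S P₁ P₂ : Matrix ι ι R}
    (hS : Sᵀ = S) (hP₁ : P₁ᵀ = P₁) :
    (A - S * P₁)ᵀ * (P₁ - P₂) + (P₁ - P₂) * (A - S * P₂)
      = (Aᵀ * P₁ + P₁ * A - P₁ * S * P₁ + Q) - (Aᵀ * P₂ + P₂ * A - P₂ * S * P₂ + Q) := by
  rw [transpose_sub, transpose_mul, hS, hP₁]
  noncomm_ring

theorem stmt_16_general {n : ℕ}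
    (A Q S P₁ P₂ : Matrix (Fin n) (Fin n) ℝ)
    (hS : Sᵀ = S) (hP₁ : P₁ᵀ = P₁)
    (hARE₁ : Aᵀ * P₁ + P₁ * A - P₁ * S * P₁ + Q = 0)
    (hARE₂ : Aᵀ * P₂ + P₂ * A - P₂ * S * P₂ + Q = 0)
    (hH₁ : IsHurwitz (A - S * P₁)) (hH₂ : IsHurwitz (A - S * P₂)) :
    P₁ = P₂ := by
  have hSylvester : (A - S * P₁)ᵀ * (P₁ - P₂) + (P₁ - P₂) * (A - S * P₂) = 0 := by
    rw [riccati_sub_riccati hS hP₁, hARE₁, hARE₂, sub_zero]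
  exact sub_eq_zero.mp (hH₁.eq_zero_of_transpose_mul_add_mul_eq_zero hH₂ hSylvester)

theorem stmt_16 {n : ℕ}
    (A Q S P₁ P₂ : Matrix (Fin n) (Fin n) ℝ)
    (hS : Sᵀ = S) (hP₁ : P₁ᵀ = P₁) (hP₂ : P₂ᵀ = P₂)
    (hARE₁ : Aᵀ * P₁ + P₁ * A - P₁ * S * P₁ + Q = 0)
    (hARE₂ : Aᵀ * P₂ + P₂ * A - P₂ * S * P₂ + Q = 0)
    (hH₁ : IsHurwitz (A - S * P₁)) (hH₂ : IsHurwitz (A - S * P₂)) :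
    P₁ = P₂ :=
  stmt_16_general A Q S P₁ P₂ hS hP₁ hARE₁ hARE₂ hH₁ hH₂
end
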